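/- arXiv:math/0507505 — 9 statements merged into one kernel-verified Lean document; each statement's English description precedes it below -/
import Mathlib

section
/- Let g = x^{-m} a(x) ∈ ℂ[x, x^{-1}] with m ≥ 1 and a(x) ∈ ℂ[x] not divisible by x. Then ℂ[x][g] = ℂ[x, x^{-1}] if and only if a(x)ℂ[x] + x^m ℂ[x] = ℂ[x]. -/
/-!
Since `x ∤ a`, the polynomials `a` and `x^m` are coprime, so both sides of the equivalence hold.
From `u a + v x^m = 1` we get `x^{-m} = u g + v ∈ ℂ[x][g]`, hence `x^{-1} = x^{m-1} x^{-m}` lies in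
`ℂ[x][g]`, and `x^{-1}` generates `ℂ[x, x^{-1}]` as a `ℂ[x]`-algebra.
-/

open Polynomial LaurentPolynomial

namespace LaurentPolynomial

variable {R : Type*} [CommSemiring R] {A : Subalgebra R[X] R[T;T⁻¹]}

theorem eq_top_of_T_neg_one_mem (h : T (-1) ∈ A) : A = ⊤ := by
  refine eq_top_iff.2 fun f _ => ?_
  induction f using induction_on_mul_T with
  | mul_T f n =>
    have hTn : (T (-n) : R[T;T⁻¹]) = T (-1) ^ n := by rw [T_pow, mul_neg_one]
    rw [hTn]
    exact A.mul_mem (A.algebraMap_mem f) (A.pow_mem h n)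

theorem eq_top_of_T_neg_mem {m : ℕ} (hm : m ≠ 0) (h : T (-m) ∈ A) : A = ⊤ := by
  refine eq_top_of_T_neg_one_mem ?_
  have hT : (T (-1) : R[T;T⁻¹]) = algebraMap R[X] R[T;T⁻¹] (X ^ (m - 1)) * T (-m) := by
    rw [algebraMap_X_pow, ← T_add]
    congr 1
    omega
  rw [hT]
  exact A.mul_mem (A.algebraMap_mem _) h

theorem T_neg_mem_of_isCoprime {m : ℕ} {a : R[X]} (hcop : IsCoprime a (X ^ m))
    (hg : T (-m) * a.toLaurent ∈ A) : T (-m) ∈ A := by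
  obtain ⟨u, v, huv⟩ := hcop
  have hT : (T (-m) : R[T;T⁻¹]) = u.toLaurent * (T (-m) * a.toLaurent) + v.toLaurent :=
    calc (T (-m) : R[T;T⁻¹]) = T (-m) * (u * a + v * X ^ m).toLaurent := by
          rw [huv, map_one, mul_one]
      _ = u.toLaurent * (T (-m) * a.toLaurent) + v.toLaurent * (T (-m) * T m) := by
          simp only [map_add, map_mul, toLaurent_X_pow]
          ring
      _ = _ := by rw [← T_add, neg_add_cancel, T_zero, mul_one]
  rw [hT]
  exact A.add_mem (A.mul_mem (A.algebraMap_mem u) hg) (A.algebraMap_mem v)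

end LaurentPolynomial

/-- For `g = x^{-m} a(x)` in the Laurent polynomial ring `ℂ[x,x⁻¹]`,
with `m ≥ 1` and `x ∤ a`, the `ℂ[x]`-subalgebra generated by `g` is the whole
Laurent polynomial ring iff `aℂ[x] + x^m ℂ[x] = ℂ[x]`. -/
theorem stmt0 (m : ℕ) (hm : 1 ≤ m) (a : Polynomial ℂ) (ha : ¬ (Polynomial.X ∣ a)) :
    Algebra.adjoin (Polynomial ℂ)
        ({T (-(m : ℤ)) * a.toLaurent} : Set (LaurentPolynomial ℂ)) = ⊤ ↔
      Ideal.span ({a, Polynomial.X ^ m} : Set (Polynomial ℂ)) = ⊤ := by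
  have hcop : IsCoprime a (X ^ m) := (irreducible_X.coprime_iff_not_dvd.2 ha).symm.pow_right
  refine iff_of_true ?_ ?_
  · exact eq_top_of_T_neg_mem (by omega) (T_neg_mem_of_isCoprime hcop (Algebra.subset_adjoin rfl))
  · rw [Ideal.span_insert, Ideal.sup_eq_top_iff_isCoprime]
    exact hcop
end

section
/- Let g = x₁^{-m₁}⋯xₙ^{-mₙ} a(x₁,…,xₙ) be a Laurent polynomial, where (m₁,…,mₙ) ∈ ℤⁿ and a ∈ ℂ[x₁,…,xₙ] is not divisible by any xᵢ. If the ℂ[x₁,…,xₙ]-subalgebra of ℂ[x₁,x₁^{-1},…,xₙ,xₙ^{-1}] generated by g equals the whole Laurent polynomial ring, then mᵢ ≥ 1 for every i and a·ℂ[x₁,…,xₙ] + x₁⋯xₙ·ℂ[x₁,…,xₙ] = ℂ[x₁,…,xₙ]. -/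
/-!
If `m i ≤ 0`, every generator `xⱼ` and `g = x^{-m} a` lies in the subalgebra of Laurent polynomials
with nonnegative `xᵢ`-exponents, which does not contain `xᵢ⁻¹`.

For the ideal, send Laurent polynomials to the localisation of `K[x]/(a)` at `∏ xᵢ`. This kills
`g`, so the image of the subalgebra generated by the `xᵢ` and `g` is the image of `K[x]`; as it
contains the inverse of `∏ xᵢ`, there is `c` with `c ∏ xᵢ = 1` in that localisation. Since no `xᵢ`
divides `a`, `∏ xᵢ` is coprime to `a` and hence a nonzerodivisor in `K[x]/(a)`, so already
`c ∏ xᵢ ≡ 1 mod a`.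
-/

open MvPolynomial

namespace AddMonoidAlgebra

variable {R G : Type*} [CommSemiring R] [AddMonoid G]

noncomputable def supportedSubalgebra (M : AddSubmonoid G) : Subalgebra R (AddMonoidAlgebra R G) :=
  (supported R R (M : Set G)).toSubalgebra
    (fun _ hx => by
      classical
      exact (Finset.mem_zero.mp (support_coeff_one_subset hx)) ▸ M.zero_mem)
    (fun x y hx hy => by
      classical
      intro β hβ
      obtain ⟨γ, hγ, δ, hδ, rfl⟩ := Finset.mem_add.mp (support_coeff_mul_subset x y hβ)
      exact M.add_mem (hx hγ) (hy hδ))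

theorem mem_supportedSubalgebra {M : AddSubmonoid G} {x : AddMonoidAlgebra R G} :
    x ∈ supportedSubalgebra M ↔ ↑x.coeff.support ⊆ (M : Set G) :=
  Iff.rfl

theorem single_mem_supportedSubalgebra {M : AddSubmonoid G} {β : G} (hβ : β ∈ M) (r : R) :
    single β r ∈ supportedSubalgebra (R := R) M := by
  classical
  rw [mem_supportedSubalgebra, coeff_single]
  intro γ hγ
  rwa [Finset.mem_singleton.mp (Finsupp.support_single_subset hγ)]

theorem mem_of_single_one_mem_supportedSubalgebra [Nontrivial R] {M : AddSubmonoid G} {β : G}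
    (h : single β (1 : R) ∈ supportedSubalgebra (R := R) M) : β ∈ M :=
  mem_supportedSubalgebra.mp h (by simp [coeff_single])

end AddMonoidAlgebra

open AddMonoidAlgebra

theorem Ideal.span_pair_eq_top_of_isUnit_mk {R : Type*} [CommRing R] {a b : R}
    (h : IsUnit (Ideal.Quotient.mk (Ideal.span {a}) b)) : Ideal.span {a, b} = ⊤ := by
  obtain ⟨c, hc⟩ := h.exists_left_inv
  obtain ⟨c, rfl⟩ := Ideal.Quotient.mk_surjective c
  rw [← map_mul, ← map_one (Ideal.Quotient.mk _), Ideal.Quotient.eq,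
    Ideal.mem_span_singleton'] at hc
  obtain ⟨d, hd⟩ := hc
  rw [Ideal.eq_top_iff_one, Ideal.mem_span_pair]
  exact ⟨-d, c, by linear_combination -hd⟩

theorem Ideal.Quotient.mk_mem_nonZeroDivisors_of_isRelPrime {R : Type*} [CommRing R]
    [DecompositionMonoid R] {a b : R} (h : IsRelPrime a b) :
    Ideal.Quotient.mk (Ideal.span {a}) b ∈ nonZeroDivisors (R ⧸ Ideal.span {a}) := by
  refine mem_nonZeroDivisors_iff_right.mpr fun x hx => ?_
  obtain ⟨x, rfl⟩ := Ideal.Quotient.mk_surjective x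
  rw [← map_mul, Ideal.Quotient.eq_zero_iff_mem, Ideal.mem_span_singleton] at hx
  rw [Ideal.Quotient.eq_zero_iff_mem, Ideal.mem_span_singleton]
  exact h.dvd_of_dvd_mul_right hx

namespace MvPolynomial

variable {σ R : Type*} [CommSemiring R]

noncomputable def toLaurent : MvPolynomial σ R →ₐ[R] AddMonoidAlgebra R (σ →₀ ℤ) :=
  aeval fun i => single (Finsupp.single i 1) 1

theorem toLaurent_X (i : σ) : toLaurent (X i : MvPolynomial σ R) = single (Finsupp.single i 1) 1 :=
  aeval_X _ _

theorem isUnit_toLaurent_X (i : σ) : IsUnit (toLaurent (X i : MvPolynomial σ R)) :=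
  IsUnit.of_mul_eq_one (single (-Finsupp.single i 1) 1) (by
    rw [toLaurent_X, single_mul_single, add_neg_cancel, mul_one, ← AddMonoidAlgebra.one_def])

variable (R) in
noncomputable def laurentLift {B : Type*} [CommSemiring B] [Algebra R B] (u : σ → Bˣ) :
    AddMonoidAlgebra R (σ →₀ ℤ) →ₐ[R] B :=
  lift R B (σ →₀ ℤ) <| (Units.coeHom B).comp <| AddMonoidHom.toMultiplicativeLeft <|
    Finsupp.liftAddHom fun i => zmultiplesHom _ (Additive.ofMul (u i))

theorem laurentLift_comp_toLaurent {B : Type*} [CommSemiring B] [Algebra R B] (u : σ → Bˣ) :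
    (laurentLift R u).comp toLaurent = aeval fun i => (u i : B) :=
  algHom_ext fun i => by simp [laurentLift, toLaurent_X, lift_single]

theorem one_le_of_adjoin_eq_top [Nontrivial R] (m : σ →₀ ℤ) (a : MvPolynomial σ R)
    (h : Algebra.adjoin R (Set.range (fun i => toLaurent (X i)) ∪
      {single (-m) 1 * toLaurent a}) = ⊤) (i : σ) : 1 ≤ m i := by
  by_contra! hm
  let M : AddSubmonoid (σ →₀ ℤ) := (AddSubmonoid.nonneg ℤ).comap (Finsupp.applyAddHom i)
  have hpoly : (toLaurent (σ := σ) (R := R)).range ≤ supportedSubalgebra M := by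
    rw [toLaurent, aeval_range, Algebra.adjoin_le_iff]
    rintro _ ⟨j, rfl⟩
    exact single_mem_supportedSubalgebra
      ((Finsupp.single_nonneg.mpr zero_le_one : (0 : σ →₀ ℤ) ≤ Finsupp.single j 1) i) _
  have hgen : Algebra.adjoin R (Set.range (fun i => toLaurent (X i)) ∪
      {single (-m) 1 * toLaurent a}) ≤ supportedSubalgebra M := by
    rw [Algebra.adjoin_le_iff]
    rintro _ (⟨j, rfl⟩ | rfl)
    · exact hpoly ⟨X j, rfl⟩
    · refine Subalgebra.mul_mem _ (single_mem_supportedSubalgebra ?_ _) (hpoly ⟨a, rfl⟩)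
      show 0 ≤ -m i
      omega
  have hinv := mem_of_single_one_mem_supportedSubalgebra
    (hgen (h ▸ Algebra.mem_top : single (-Finsupp.single i (1 : ℤ)) (1 : R) ∈ _))
  simp [M] at hinv

theorem exists_mul_prod_X_eq_one_of_adjoin_eq_top [Fintype σ] {B : Type*} [CommSemiring B]
    [Algebra R B] (m : σ →₀ ℤ) {a : MvPolynomial σ R} (f : MvPolynomial σ R →ₐ[R] B)
    (hX : ∀ i, IsUnit (f (X i))) (hfa : f a = 0)
    (h : Algebra.adjoin R (Set.range (fun i => toLaurent (X i)) ∪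
      {single (-m) 1 * toLaurent a}) = ⊤) :
    ∃ c, f c * f (∏ i, X i) = 1 := by
  set ψ := laurentLift R fun i => (hX i).unit
  have hψ (p : MvPolynomial σ R) : ψ (toLaurent p) = f p := by
    rw [← AlgHom.comp_apply, laurentLift_comp_toLaurent]
    congr 1
    exact algHom_ext fun i => by simp
  have hgen : Algebra.adjoin R (Set.range (fun i => toLaurent (X i)) ∪
      {single (-m) 1 * toLaurent a}) ≤ f.range.comap ψ := by
    rw [Algebra.adjoin_le_iff]
    rintro _ (⟨j, rfl⟩ | rfl)
    · exact ⟨X j, (hψ _).symm⟩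
    · exact ⟨0, by simp [hψ, hfa]⟩
  have hunit : IsUnit (toLaurent (∏ i, X i : MvPolynomial σ R)) := by
    rw [map_prod, IsUnit.prod_univ_iff]
    exact isUnit_toLaurent_X
  obtain ⟨c, hc : f c = ψ _⟩ :=
    hgen (h ▸ Algebra.mem_top : (↑hunit.unit⁻¹ : AddMonoidAlgebra R (σ →₀ ℤ)) ∈ _)
  refine ⟨c, ?_⟩
  rw [hc, ← hψ, ← map_mul, hunit.val_inv_mul, map_one]

end MvPolynomial

theorem span_pair_prod_X_eq_top_of_adjoin_eq_top {σ K : Type*} [Fintype σ] [CommRing K]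
    [IsDomain K] [UniqueFactorizationMonoid K]
    (m : σ →₀ ℤ) {a : MvPolynomial σ K} (ha : ∀ i, ¬ X i ∣ a)
    (h : Algebra.adjoin K (Set.range (fun i => toLaurent (X i)) ∪
      {single (-m) 1 * toLaurent a}) = ⊤) :
    Ideal.span {a, ∏ i, X i} = ⊤ := by
  apply Ideal.span_pair_eq_top_of_isUnit_mk
  set s := Ideal.Quotient.mk (Ideal.span {a}) (∏ i, X i : MvPolynomial σ K)
  have hs : s ∈ nonZeroDivisors _ := Ideal.Quotient.mk_mem_nonZeroDivisors_of_isRelPrime <|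
    IsRelPrime.prod_right fun i _ =>
      ((X_prime (i := i)).irreducible.isRelPrime_iff_not_dvd.mpr (ha i)).symm
  let f := (IsScalarTower.toAlgHom K _ (Localization.Away s)).comp
    (Ideal.Quotient.mkₐ K (Ideal.span {a}))
  have hfX (i : σ) : IsUnit (f (X i)) :=
    isUnit_of_dvd_unit (map_dvd f (Finset.dvd_prod_of_mem _ (Finset.mem_univ i)))
      (IsLocalization.Away.algebraMap_isUnit s)
  obtain ⟨c, hc⟩ := exists_mul_prod_X_eq_one_of_adjoin_eq_top m f hfX (by simp [f]) h
  have hinj := IsLocalization.injective (Localization.Away s) (Submonoid.powers_le.mpr hs)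
  refine IsUnit.of_mul_eq_one_right (Ideal.Quotient.mk _ c) (hinj ?_)
  rw [map_mul, map_one]
  exact hc

/-- If the `ℂ[x₁,…,xₙ]`-subalgebra of the Laurent polynomial ring
generated by `g = x^{-[m]} a(x)` (with no `xᵢ` dividing `a`) is the whole Laurent
polynomial ring, then every `mᵢ ≥ 1` and `a·ℂ[x] + x₁⋯xₙ·ℂ[x] = ℂ[x]`. -/
theorem stmt1 (n : ℕ) (m : Fin n →₀ ℤ) (a : MvPolynomial (Fin n) ℂ)
    (ha : ∀ i, ¬ (MvPolynomial.X i ∣ a))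
    (φ : MvPolynomial (Fin n) ℂ →ₐ[ℂ] AddMonoidAlgebra ℂ (Fin n →₀ ℤ))
    (hφ : φ = MvPolynomial.aeval
      (fun i => AddMonoidAlgebra.single (Finsupp.single i 1) (1 : ℂ)))
    (h : Algebra.adjoin ℂ
        (Set.range (fun i => φ (MvPolynomial.X i)) ∪
          {AddMonoidAlgebra.single (-m) (1 : ℂ) * φ a}) = ⊤) :
    (∀ i, 1 ≤ m i) ∧
      Ideal.span ({a, ∏ i, MvPolynomial.X i} : Set (MvPolynomial (Fin n) ℂ)) = ⊤ := by
  subst hφ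
  exact ⟨one_le_of_adjoin_eq_top m a h, span_pair_prod_X_eq_top_of_adjoin_eq_top m ha h⟩
end

section
/- Suppose a, b ∈ ℂ[x₁,…,xₙ] satisfy x^{(s-1)[m]} = b·x^{s[m]} + c·a for some s ≥ 2, some c ∈ ℂ[x₁,…,xₙ], where x^{[m]} = x₁^{m₁}⋯xₙ^{mₙ} with all mᵢ ≥ 1, and where no xᵢ divides a. Then there exists c' ∈ ℂ[x₁,…,xₙ] with 1 = b·x^{[m]} + c'·a; in particular a·ℂ[x] + x^{[m]}·ℂ[x] = ℂ[x]. -/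
open MvPolynomial

noncomputable def subZero (n : ℕ) (i : Fin n) :
    MvPolynomial (Fin n) ℂ →ₐ[ℂ] MvPolynomial (Fin n) ℂ :=
  aeval (fun j => if j = i then 0 else X j)

lemma subZero_X (n : ℕ) (i j : Fin n) :
    subZero n i (X j) = if j = i then 0 else X j := by
  rw [subZero, aeval_X]

lemma X_dvd_sub_subZero (n : ℕ) (i : Fin n) (p : MvPolynomial (Fin n) ℂ) :
    X i ∣ p - subZero n i p := by
  induction p using MvPolynomial.induction_on with
  | C a => simp [subZero]
  | add p q hp hq =>
    have : p + q - subZero n i (p + q) = (p - subZero n i p) + (q - subZero n i q) := by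
      rw [map_add]; ring
    rw [this]
    exact dvd_add hp hq
  | mul_X p j hp =>
    rw [map_mul, subZero_X]
    by_cases hji : j = i
    · subst hji
      rw [if_pos rfl, mul_zero, sub_zero]
      exact Dvd.dvd.mul_left (dvd_refl _) p
    · rw [if_neg hji]
      have h2 : p * X j - subZero n i p * X j = (p - subZero n i p) * X j := by ring
      rw [h2]
      exact Dvd.dvd.mul_right hp _

lemma X_dvd_iff_subZero (n : ℕ) (i : Fin n) (p : MvPolynomial (Fin n) ℂ) :
    X i ∣ p ↔ subZero n i p = 0 := by
  constructor
  · rintro ⟨q, rfl⟩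
    rw [map_mul, subZero_X, if_pos rfl, zero_mul]
  · intro h
    have := X_dvd_sub_subZero n i p
    rwa [h, sub_zero] at this

lemma prime_X' (n : ℕ) (i : Fin n) : Prime (X i : MvPolynomial (Fin n) ℂ) := by
  refine ⟨X_ne_zero i, ?_, ?_⟩
  · intro hu
    obtain ⟨u, hu'⟩ := hu.exists_right_inv
    have := congrArg (subZero n i) hu'
    rw [map_mul, map_one, subZero_X, if_pos rfl, zero_mul] at this
    exact one_ne_zero this.symm
  · intro p q hpq
    rw [X_dvd_iff_subZero, map_mul, mul_eq_zero, ← X_dvd_iff_subZero,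
      ← X_dvd_iff_subZero] at hpq
    exact hpq

lemma aux_prod_pow_dvd {R : Type*} [CommRing R] [IsDomain R] {ι : Type*}
    (t : Finset ι) (p : ι → R) (e : ι → ℕ) (hp : ∀ i, Prime (p i))
    (a : R) (ha : ∀ i, ¬ p i ∣ a) :
    ∀ c : R, (∏ i ∈ t, p i ^ e i) ∣ c * a → (∏ i ∈ t, p i ^ e i) ∣ c := by
  classical
  induction t using Finset.induction_on with
  | empty => simp
  | @insert j t hj ih =>
    intro c h
    rw [Finset.prod_insert hj] at h ⊢
    have h1 : p j ^ e j ∣ c * a := dvd_trans (dvd_mul_right _ _) h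
    have h2 : p j ^ e j ∣ c := (hp j).pow_dvd_of_dvd_mul_right _ (ha j) h1
    obtain ⟨c', rfl⟩ := h2
    have hne : p j ^ e j ≠ 0 := pow_ne_zero _ (hp j).ne_zero
    have h3 : (∏ i ∈ t, p i ^ e i) ∣ c' * a := by
      refine (mul_dvd_mul_iff_left hne).mp ?_
      rw [← mul_assoc]
      exact h
    exact mul_dvd_mul_left _ (ih c' h3)

/-- If `x^{(s-1)[m]} = b·x^{s[m]} + c·a` with `s ≥ 2`, all `mᵢ ≥ 1`
and no `xᵢ` dividing `a`, then there is `c'` with `1 = b·x^{[m]} + c'·a`;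
in particular `a·ℂ[x] + x^{[m]}·ℂ[x] = ℂ[x]`. -/
theorem stmt2 (n : ℕ) (m : Fin n → ℕ) (hm : ∀ i, 1 ≤ m i)
    (a b c : MvPolynomial (Fin n) ℂ) (ha : ∀ i, ¬ (MvPolynomial.X i ∣ a))
    (s : ℕ) (hs : 2 ≤ s)
    (h : (∏ i, MvPolynomial.X i ^ ((s - 1) * m i)) =
        b * (∏ i, MvPolynomial.X i ^ (s * m i)) + c * a) :
    (∃ c' : MvPolynomial (Fin n) ℂ,
        (1 : MvPolynomial (Fin n) ℂ) = b * (∏ i, MvPolynomial.X i ^ m i) + c' * a) ∧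
      Ideal.span ({a, ∏ i, MvPolynomial.X i ^ m i} : Set (MvPolynomial (Fin n) ℂ)) = ⊤ := by
  classical
  obtain ⟨u, rfl⟩ : ∃ u, s = u + 1 := ⟨s - 1, by omega⟩
  simp only [Nat.add_sub_cancel] at h
  set P : MvPolynomial (Fin n) ℂ := ∏ i, X i ^ (u * m i) with hP
  set M : MvPolynomial (Fin n) ℂ := ∏ i, X i ^ m i with hM
  have hsplit : (∏ i, (X i : MvPolynomial (Fin n) ℂ) ^ ((u + 1) * m i)) = P * M := by
    rw [hP, hM, ← Finset.prod_mul_distrib]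
    refine Finset.prod_congr rfl fun i _ => ?_
    rw [← pow_add, add_mul, one_mul]
  rw [hsplit] at h
  have hdvd : P ∣ c * a := ⟨1 - b * M, by linear_combination -h⟩
  have hPc : P ∣ c :=
    aux_prod_pow_dvd Finset.univ _ _ (fun i => prime_X' n i) a ha c hdvd
  obtain ⟨c', rfl⟩ := hPc
  have hPne : P ≠ 0 := by
    rw [hP]
    exact Finset.prod_ne_zero_iff.mpr fun i _ => pow_ne_zero _ (X_ne_zero i)
  have key : (1 : MvPolynomial (Fin n) ℂ) = b * M + c' * a := by
    have h1 : P * 1 = P * (b * M + c' * a) := by linear_combination h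
    exact mul_left_cancel₀ hPne h1
  refine ⟨⟨c', key⟩, ?_⟩
  rw [Ideal.eq_top_iff_one]
  exact Ideal.mem_span_pair.mpr ⟨c', b, by linear_combination -key⟩
end

section
/- Let B be an integral domain containing ℚ and ∂ a locally nilpotent derivation of B. Define deg_∂(b) = max{ m : ∂^m b ≠ 0 } for b ≠ 0 and deg_∂(0) = -∞. Then deg_∂(b·b') = deg_∂(b) + deg_∂(b') and deg_∂(b + b') ≤ max(deg_∂(b), deg_∂(b')) for all b, b' ∈ B. -/
open Finset

private lemma deriv_mul' {B : Type*} [CommRing B] [Algebra ℚ B]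
    (D : Derivation ℚ B B) (x y : B) : D (x * y) = D x * y + x * D y := by
  rw [D.leibniz]; simp [smul_eq_mul]; ring

private lemma iter_deriv_mul {B : Type*} [CommRing B] [Algebra ℚ B]
    (D : Derivation ℚ B B) (n : ℕ) (p q : B) :
    (⇑D)^[n] (p * q) =
      ∑ k ∈ range n.succ, (n.choose k • ((⇑D)^[n - k] p * (⇑D)^[k] q)) := by
  induction n with
  | zero => simp [Finset.range]
  | succ n IH =>
    calc
      (⇑D)^[n + 1] (p * q) =
          D (∑ k ∈ range n.succ,
              n.choose k • ((⇑D)^[n - k] p * (⇑D)^[k] q)) := by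
        rw [Function.iterate_succ_apply', IH]
      _ = (∑ k ∈ range n.succ,
            n.choose k • ((⇑D)^[n - k + 1] p * (⇑D)^[k] q)) +
          ∑ k ∈ range n.succ,
            n.choose k • ((⇑D)^[n - k] p * (⇑D)^[k + 1] q) := by
        rw [map_sum]
        simp_rw [map_nsmul, deriv_mul', Function.iterate_succ_apply',
          smul_add, sum_add_distrib]
      _ = (∑ k ∈ range n.succ,
                n.choose k.succ • ((⇑D)^[n - k] p * (⇑D)^[k + 1] q)) +
              1 • ((⇑D)^[n + 1] p * (⇑D)^[0] q) +
            ∑ k ∈ range n.succ, n.choose k • ((⇑D)^[n - k] p * (⇑D)^[k + 1] q) :=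
        ?_
      _ = ((∑ k ∈ range n.succ, n.choose k • ((⇑D)^[n - k] p * (⇑D)^[k + 1] q)) +
              ∑ k ∈ range n.succ,
                n.choose k.succ • ((⇑D)^[n - k] p * (⇑D)^[k + 1] q)) +
            1 • ((⇑D)^[n + 1] p * (⇑D)^[0] q) := by
        rw [add_comm, add_assoc]
      _ = (∑ i ∈ range n.succ,
              (n + 1).choose (i + 1) • ((⇑D)^[n + 1 - (i + 1)] p * (⇑D)^[i + 1] q)) +
            1 • ((⇑D)^[n + 1] p * (⇑D)^[0] q) := by
        simp_rw [Nat.choose_succ_succ, Nat.succ_sub_succ, add_smul, sum_add_distrib]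
      _ = ∑ k ∈ range n.succ.succ,
            n.succ.choose k • ((⇑D)^[n.succ - k] p * (⇑D)^[k] q) := by
        rw [sum_range_succ' _ n.succ, Nat.choose_zero_right, tsub_zero]
    congr
    refine (sum_range_succ' _ _).trans (congr_arg₂ (· + ·) ?_ ?_)
    · rw [sum_range_succ, Nat.choose_succ_self, zero_smul, add_zero]
      refine sum_congr rfl fun k hk => ?_
      rw [mem_range] at hk
      congr
      omega
    · rw [Nat.choose_zero_right, tsub_zero]

private lemma iter_stable {B : Type*} [CommRing B] [Algebra ℚ B]
    (D : Derivation ℚ B B) {x : B} {n : ℕ} (h : (⇑D)^[n] x = 0) {m : ℕ} (hm : n ≤ m) :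
    (⇑D)^[m] x = 0 := by
  obtain ⟨k, rfl⟩ := Nat.exists_eq_add_of_le hm
  rw [add_comm, Function.iterate_add_apply, h]
  exact Function.iterate_fixed (by simp) k

/-- For a locally nilpotent derivation `D` of an integral domain `B`
containing `ℚ`, the degree function `deg_D` is a degree function:
`deg_D(b·b') = deg_D(b) + deg_D(b')` and `deg_D(b + b') ≤ max(deg_D b, deg_D b')`.
Here `deg_D b = p` is expressed by `D^[p] b ≠ 0` and `D^[p+1] b = 0`. -/
theorem stmt4 {B : Type*} [CommRing B] [IsDomain B] [Algebra ℚ B]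
    (D : Derivation ℚ B B) (hln : ∀ b : B, ∃ n : ℕ, (⇑D)^[n] b = 0)
    (b b' : B) (p q : ℕ)
    (hpb : (⇑D)^[p] b ≠ 0) (hpb1 : (⇑D)^[p + 1] b = 0)
    (hqb : (⇑D)^[q] b' ≠ 0) (hqb1 : (⇑D)^[q + 1] b' = 0) :
    ((⇑D)^[p + q] (b * b') ≠ 0 ∧ (⇑D)^[p + q + 1] (b * b') = 0) ∧
      (⇑D)^[max p q + 1] (b + b') = 0 := by
  have charzero : CharZero B := charZero_of_injective_algebraMap (algebraMap ℚ B).injective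
  refine ⟨⟨?_, ?_⟩, ?_⟩
  · rw [iter_deriv_mul]
    rw [Finset.sum_eq_single q]
    · simp only [Nat.add_sub_cancel]
      exact smul_ne_zero (Nat.choose_pos (Nat.le_add_left q p) |>.ne') (mul_ne_zero hpb hqb)
    · intro k hk hne
      rcases lt_or_gt_of_ne hne with h | h
      · have : (⇑D)^[p + q - k] b = 0 := iter_stable D hpb1 (by omega)
        rw [this, zero_mul, smul_zero]
      · have : (⇑D)^[k] b' = 0 := iter_stable D hqb1 (by omega)
        rw [this, mul_zero, smul_zero]
    · intro h
      exact absurd (Finset.mem_range.mpr (by omega)) h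
  · rw [iter_deriv_mul]
    refine Finset.sum_eq_zero fun k hk => ?_
    rw [Finset.mem_range] at hk
    rcases le_or_gt k q with h | h
    · have : (⇑D)^[p + q + 1 - k] b = 0 := iter_stable D hpb1 (by omega)
      rw [this, zero_mul, smul_zero]
    · have : (⇑D)^[k] b' = 0 := iter_stable D hqb1 (by omega)
      rw [this, mul_zero, smul_zero]
  · have hadd : ∀ (n : ℕ) (x y : B), (⇑D)^[n] (x + y) = (⇑D)^[n] x + (⇑D)^[n] y := by
      intro n
      induction n with
      | zero => simp
      | succ n ih => intro x y; rw [Function.iterate_succ_apply', ih, map_add,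
          Function.iterate_succ_apply', Function.iterate_succ_apply']
    rw [hadd, iter_stable D hpb1 (by omega), iter_stable D hqb1 (by omega), add_zero]
end

section
/- Let B be an integral domain containing ℚ with a nonzero locally nilpotent derivation ∂, and let f ∈ B satisfy ∂²f = 0 but ∂f ≠ 0. Then for every b ∈ B with ∂^{m+1}b = 0 and ∂^m b ≠ 0, there exist a', a₀, …, a_m ∈ Ker ∂ with a' ≠ 0, a_m ≠ 0, and a'·b = Σ_{j=0}^{m} a_j f^j. -/
/-- For a nonzero locally nilpotent derivation `D` of a domain `B ⊇ ℚ`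
and `f` with `D²f = 0`, `Df ≠ 0`: every `b` with `D^[m+1] b = 0`, `D^[m] b ≠ 0`
satisfies `a'·b = Σ_{j=0}^m a_j f^j` with `a', a_j ∈ Ker D`, `a' ≠ 0`, `a_m ≠ 0`. -/
theorem stmt5 {B : Type*} [CommRing B] [IsDomain B] [Algebra ℚ B]
    (D : Derivation ℚ B B) (hD : D ≠ 0)
    (hln : ∀ b : B, ∃ n : ℕ, (⇑D)^[n] b = 0)
    (f : B) (hf2 : D (D f) = 0) (hf1 : D f ≠ 0)
    (b : B) (m : ℕ) (hb1 : (⇑D)^[m + 1] b = 0) (hb : (⇑D)^[m] b ≠ 0) :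
    ∃ (a' : B) (A : ℕ → B), D a' = 0 ∧ (∀ j ≤ m, D (A j) = 0) ∧
      a' ≠ 0 ∧ A m ≠ 0 ∧
      a' * b = ∑ j ∈ Finset.range (m + 1), A j * f ^ j := by
  clear hD hln
  induction m generalizing b with
  | zero =>
    refine ⟨1, fun _ => b, ?_, ?_, one_ne_zero, ?_, ?_⟩
    · simp
    · intro j hj
      simpa using hb1
    · simpa using hb
    · simp
  | succ k ih =>
    obtain ⟨a', A, ha', hA, ha'ne, hAk, heq⟩ := ih (D b)
      (by rw [← Function.iterate_succ_apply]; exact hb1)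
      (by rw [← Function.iterate_succ_apply]; exact hb)
    set c := D f with hc
    set w : B := c * a' * b -
      ∑ j ∈ Finset.range (k + 1),
        (algebraMap ℚ B ((j : ℚ) + 1)⁻¹) * A j * f ^ (j + 1) with hw
    have hterm : ∀ j : B, True := fun _ => trivial
    have hDw : D w = 0 := by
      have hsum : D (∑ j ∈ Finset.range (k + 1),
          (algebraMap ℚ B ((j : ℚ) + 1)⁻¹) * A j * f ^ (j + 1))
          = ∑ j ∈ Finset.range (k + 1), A j * f ^ j * c := by
        rw [map_sum]
        refine Finset.sum_congr rfl fun j hj => ?_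
        have hj' : j ≤ k := Nat.lt_succ_iff.mp (Finset.mem_range.mp hj)
        have hpow : D (f ^ (j + 1)) = ((j : B) + 1) * f ^ j * c := by
          rw [Derivation.leibniz_pow]
          simp [nsmul_eq_mul, smul_eq_mul]
          push_cast
          ring
        rw [Derivation.leibniz, Derivation.leibniz, Derivation.map_algebraMap,
          hA j hj', hpow]
        have hcast : ((j : B) + 1) = algebraMap ℚ B ((j : ℚ) + 1) := by
          push_cast
          simp
        have hinv : (algebraMap ℚ B ((j : ℚ) + 1)⁻¹) * ((j : B) + 1) = 1 := by
          rw [hcast, ← map_mul]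
          rw [inv_mul_cancel₀ (by positivity : ((j : ℚ) + 1) ≠ 0)]
          simp
        simp only [smul_eq_mul]
        calc (algebraMap ℚ B ((j : ℚ) + 1)⁻¹) * A j * (((j : B) + 1) * f ^ j * c)
              + f ^ (j + 1) * ((algebraMap ℚ B ((j : ℚ) + 1)⁻¹) * 0 + A j * 0)
            = ((algebraMap ℚ B ((j : ℚ) + 1)⁻¹) * ((j : B) + 1)) * (A j * f ^ j * c) := by
              ring
          _ = A j * f ^ j * c := by rw [hinv, one_mul]
      have h1 : D (c * a' * b) = c * a' * D b := by
        rw [Derivation.leibniz, Derivation.leibniz]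
        simp only [smul_eq_mul, hf2, ha', ← hc]
        ring
      rw [hw, map_sub, h1, hsum, mul_assoc, heq, Finset.mul_sum,
        ← Finset.sum_sub_distrib]
      refine Finset.sum_eq_zero fun j hj => ?_
      ring
    refine ⟨c * a', fun j => if j = 0 then w
        else (algebraMap ℚ B (j : ℚ)⁻¹) * A (j - 1), ?_, ?_, ?_, ?_, ?_⟩
    · rw [Derivation.leibniz]
      simp [hf2, ha']
    · intro j hj
      rcases Nat.eq_zero_or_pos j with h0 | hpos
      · simp [h0, hDw]
      · have hne : j ≠ 0 := Nat.pos_iff_ne_zero.mp hpos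
        simp only [if_neg hne]
        rw [Derivation.leibniz, Derivation.map_algebraMap]
        have : D (A (j - 1)) = 0 := hA _ (by omega)
        simp [this]
    · exact mul_ne_zero hf1 ha'ne
    · have hne : k + 1 ≠ 0 := Nat.succ_ne_zero k
      simp only [if_neg hne, Nat.add_sub_cancel]
      refine mul_ne_zero ?_ hAk
      have : ((k + 1 : ℕ) : ℚ)⁻¹ ≠ 0 := by positivity
      exact (map_ne_zero_iff _ (algebraMap ℚ B).injective).mpr (by push_cast at this ⊢; exact this)
    · rw [Finset.sum_range_succ']
      simp only [if_neg (Nat.succ_ne_zero _), Nat.add_sub_cancel, if_pos rfl]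
      have : ∀ j ∈ Finset.range (k + 1),
          (algebraMap ℚ B ((j + 1 : ℕ) : ℚ)⁻¹) * A j * f ^ (j + 1)
          = (algebraMap ℚ B ((j : ℚ) + 1)⁻¹) * A j * f ^ (j + 1) := by
        intro j hj
        push_cast
        ring_nf
      rw [Finset.sum_congr rfl this]
      simp only [ite_true, hw, mul_one]
      ring
end

section
/- Let d_y > 0 and d₁, …, dₙ be real numbers such that d_y, d₁, …, dₙ are linearly independent over ℤ, and let m₁, …, mₙ, r be positive integers. Define the weight of a monomial x₁^{α₁}⋯xₙ^{αₙ} y^{β} z^{γ} to be Σαᵢdᵢ + βd_y + γ(r·d_y − Σmᵢdᵢ). If two distinct monomials μ₁, μ₂ in x₁,…,xₙ,y,z have equal weight, then μ₁/μ₂ = (x₁^{m₁}⋯xₙ^{mₙ} z y^{-r})^k in the field of fractions for some nonzero integer k. -/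
/-- With weights `d_y > 0`, `d₁,…,dₙ` such that `d_y, d₁,…,dₙ` are
`ℤ`-linearly independent, if two distinct monomials `x^{α}y^{β}z^{γ}` have the same
weight (where `z` has weight `r·d_y − Σ mᵢdᵢ`), then their ratio is
`(x^{[m]} z y^{-r})^k` for some nonzero integer `k`. -/
theorem stmt8 (n : ℕ) (dy : ℝ) (hdy : 0 < dy) (d : Fin n → ℝ)
    (hind : ∀ (c : ℤ) (e : Fin n → ℤ),
      (c : ℝ) * dy + ∑ i, (e i : ℝ) * d i = 0 → c = 0 ∧ e = 0)
    (m : Fin n → ℕ) (hm : ∀ i, 1 ≤ m i) (r : ℕ) (hr : 1 ≤ r)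
    (α₁ α₂ : Fin n → ℕ) (β₁ β₂ γ₁ γ₂ : ℕ)
    (hne : (α₁, β₁, γ₁) ≠ (α₂, β₂, γ₂))
    (hw : (∑ i, (α₁ i : ℝ) * d i) + (β₁ : ℝ) * dy
            + (γ₁ : ℝ) * ((r : ℝ) * dy - ∑ i, (m i : ℝ) * d i)
        = (∑ i, (α₂ i : ℝ) * d i) + (β₂ : ℝ) * dy
            + (γ₂ : ℝ) * ((r : ℝ) * dy - ∑ i, (m i : ℝ) * d i)) :
    ∃ k : ℤ, k ≠ 0 ∧ (∀ i, (α₁ i : ℤ) - (α₂ i : ℤ) = k * (m i : ℤ)) ∧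
      (β₁ : ℤ) - (β₂ : ℤ) = -(k * (r : ℤ)) ∧ (γ₁ : ℤ) - (γ₂ : ℤ) = k := by
  set k : ℤ := (γ₁ : ℤ) - γ₂ with hk
  have key := hind ((β₁ : ℤ) - β₂ + k * r)
    (fun i => (α₁ i : ℤ) - α₂ i - k * m i) ?_
  · obtain ⟨hc, he⟩ := key
    refine ⟨k, ?_, ?_, ?_, rfl⟩
    · intro h0
      apply hne
      have hα : α₁ = α₂ := by
        funext i
        have := congrFun he i
        simp only [h0, Pi.zero_apply, zero_mul, mul_zero] at this
        omega
      have hβ : β₁ = β₂ := by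
        rw [h0] at hc; omega
      have hγ : γ₁ = γ₂ := by omega
      simp [hα, hβ, hγ]
    · intro i
      have := congrFun he i
      simp only [Pi.zero_apply] at this
      linarith [this]
    · omega
  · simp only [hk]
    push_cast
    have hsum : ∑ i, (((α₁ i : ℝ) - (α₂ i : ℝ) - ((γ₁ : ℝ) - (γ₂ : ℝ)) * (m i : ℝ)) * d i)
        = ∑ i, (α₁ i : ℝ) * d i - ∑ i, (α₂ i : ℝ) * d i
          - ((γ₁ : ℝ) - (γ₂ : ℝ)) * ∑ i, (m i : ℝ) * d i := by
      rw [Finset.mul_sum, ← Finset.sum_sub_distrib, ← Finset.sum_sub_distrib]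
      exact Finset.sum_congr rfl fun i _ => by ring
    rw [hsum]
    linarith [hw]
end

section
/- Let σ₁, …, σ_r ∈ ℂ[x₁,…,xₙ] satisfy: σᵢ(0) ≠ σⱼ(0) for i ≠ j, and σᵢ(x) − σᵢ(0) is divisible by x₁⋯xₙ for each i. Then in the variety X ⊂ ℂ^{n+2} with equation x₁^{m₁}⋯xₙ^{mₙ} z = ∏_{i=1}^r (y − σᵢ(x)), the fiber over the locus {x₁⋯xₙ = 0} under the projection to (x₁,…,xₙ), taken with its reduced structure, is the disjoint union of the r closed subsets Dᵢ = {x₁⋯xₙ = 0, y = σᵢ(0)}, each isomorphic to H × ℂ where H = {x₁⋯xₙ = 0} ⊂ ℂⁿ (with coordinate z on the second factor). -/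
open MvPolynomial

lemma eval_sigma_eq (n r : ℕ) (σ : Fin r → MvPolynomial (Fin n) ℂ)
    (h2 : ∀ i, (∏ k, MvPolynomial.X k) ∣
      (σ i - MvPolynomial.C (MvPolynomial.eval (0 : Fin n → ℂ) (σ i))))
    (x : Fin n → ℂ) (hx : ∏ k, x k = 0) (i : Fin r) :
    MvPolynomial.eval x (σ i) = MvPolynomial.eval (0 : Fin n → ℂ) (σ i) := by
  obtain ⟨q, hq⟩ := h2 i
  have h3 : MvPolynomial.eval x (σ i) - MvPolynomial.eval (0 : Fin n → ℂ) (σ i)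
      = (∏ k, x k) * MvPolynomial.eval x q := by
    simpa [map_prod] using congrArg (MvPolynomial.eval x) hq
  rw [hx, zero_mul] at h3
  exact sub_eq_zero.mp h3

lemma prod_pow_eq_zero (n : ℕ) (m : Fin n → ℕ) (hm : ∀ i, 1 ≤ m i)
    (x : Fin n → ℂ) (hx : ∏ k, x k = 0) : ∏ k, x k ^ m k = 0 := by
  obtain ⟨k, -, hk⟩ := Finset.prod_eq_zero_iff.mp hx
  exact Finset.prod_eq_zero (Finset.mem_univ k) (by rw [hk]; exact zero_pow (Nat.one_le_iff_ne_zero.mp (hm k)))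

/-- For `X = {x^{[m]} z = ∏ᵢ(y − σᵢ(x))}` with `σᵢ(0)` pairwise
distinct and `x₁⋯xₙ ∣ σᵢ(x) − σᵢ(0)`, the reduced fiber of the projection to
`(x₁,…,xₙ)` over `{x₁⋯xₙ = 0}` is the disjoint union of the `r` sets
`Dᵢ = {x₁⋯xₙ = 0, y = σᵢ(0)}`, each in bijection with `H × ℂ`
(coordinate `z` on the second factor). -/
theorem stmt16 (n r : ℕ) (m : Fin n → ℕ) (hm : ∀ i, 1 ≤ m i)
    (σ : Fin r → MvPolynomial (Fin n) ℂ)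
    (h1 : ∀ i j, i ≠ j →
      MvPolynomial.eval (0 : Fin n → ℂ) (σ i) ≠ MvPolynomial.eval (0 : Fin n → ℂ) (σ j))
    (h2 : ∀ i, (∏ k, MvPolynomial.X k) ∣
      (σ i - MvPolynomial.C (MvPolynomial.eval (0 : Fin n → ℂ) (σ i))))
    (Fib : Set ((Fin n → ℂ) × ℂ × ℂ)) -- the fiber of X over {x₁⋯xₙ = 0}
    (hFib : Fib = {p | (∏ k, p.1 k ^ m k) * p.2.2 =
        (∏ i, (p.2.1 - MvPolynomial.eval p.1 (σ i))) ∧ ∏ k, p.1 k = 0})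
    (D : Fin r → Set ((Fin n → ℂ) × ℂ × ℂ))
    (hD : D = fun i => {p | ∏ k, p.1 k = 0 ∧
        p.2.1 = MvPolynomial.eval (0 : Fin n → ℂ) (σ i)}) :
    Fib = (⋃ i, D i) ∧
      (∀ i j, i ≠ j → Disjoint (D i) (D j)) ∧
      (∀ i, Set.BijOn
        (fun q : (Fin n → ℂ) × ℂ =>
          ((q.1, MvPolynomial.eval (0 : Fin n → ℂ) (σ i), q.2) : (Fin n → ℂ) × ℂ × ℂ))
        {q | ∏ k, q.1 k = 0} (D i)) := by
  subst hFib hD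
  refine ⟨?_, ?_, ?_⟩
  · ext p
    simp only [Set.mem_setOf_eq, Set.mem_iUnion]
    constructor
    · rintro ⟨heq, hx⟩
      rw [prod_pow_eq_zero n m hm _ hx, zero_mul] at heq
      obtain ⟨i, -, hi⟩ := Finset.prod_eq_zero_iff.mp heq.symm
      refine ⟨i, hx, ?_⟩
      rw [← eval_sigma_eq n r σ h2 p.1 hx i]
      exact sub_eq_zero.mp hi
    · rintro ⟨i, hx, hy⟩
      refine ⟨?_, hx⟩
      rw [prod_pow_eq_zero n m hm _ hx, zero_mul]
      refine (Finset.prod_eq_zero (Finset.mem_univ i) ?_).symm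
      rw [hy, eval_sigma_eq n r σ h2 p.1 hx i, sub_self]
  · intro i j hij
    rw [Set.disjoint_left]
    rintro p ⟨-, hpi⟩ ⟨-, hpj⟩
    exact h1 i j hij (hpi ▸ hpj)
  · intro i
    refine ⟨fun q hq => ⟨hq, rfl⟩, fun q hq q' hq' h => ?_, fun p hp => ?_⟩
    · simp only [Prod.mk.injEq] at h
      exact Prod.ext_iff.mpr ⟨h.1, h.2.2⟩
    · obtain ⟨hx, hy⟩ := hp
      exact ⟨(p.1, p.2.2), hx, Prod.ext_iff.mpr ⟨rfl, Prod.ext_iff.mpr ⟨hy.symm, rfl⟩⟩⟩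
end

section
/- Let B be a finitely generated ℂ-algebra that is an integral domain, equipped with a degree function d : B → ℝ ∪ {−∞} (d(bb') = d(b)+d(b'), d(b+b') ≤ max(d(b), d(b'))) whose associated graded algebra gr B is a domain. Let ∂ be a nonzero locally nilpotent derivation of B and gr ∂ the associated homogeneous locally nilpotent derivation of gr B. Then for every nonzero b ∈ B, deg_∂(b) ≥ deg_{gr∂}(gr(b)). -/
/-- Let `B` be a finitely generated integral `ℂ`-domain with a
degree function `d` (values in `ℝ ∪ {−∞}`) whose associated graded algebra
`A = gr B` (a domain, with multiplicative symbol map `gr : B → A`) carries the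
homogeneous locally nilpotent derivation `D' = gr D` associated with a nonzero
locally nilpotent derivation `D` of `B`; `D'` is characterized by
`D'(gr b) = gr(D b)` when `d(D b) − d(b)` attains its maximal value `t₀`, and
`D'(gr b) = 0` otherwise. Then `deg_D(b) ≥ deg_{D'}(gr b)` for every nonzero
`b ∈ B`, expressed as: `D'^[k](gr b) ≠ 0` implies `D^[k] b ≠ 0`. -/
theorem stmt17 {B A : Type*} [CommRing B] [IsDomain B] [Algebra ℂ B]
    [CommRing A] [IsDomain A] [Algebra ℂ A]
    (hfg : Algebra.FiniteType ℂ B)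
    (d : B → WithBot ℝ) (hd0 : d 0 = ⊥) (hdne : ∀ b : B, b ≠ 0 → d b ≠ ⊥)
    (hdmul : ∀ b b', d (b * b') = d b + d b')
    (hdadd : ∀ b b', d (b + b') ≤ max (d b) (d b'))
    (gr : B → A) (hgr0 : gr 0 = 0) (hgrne : ∀ b : B, b ≠ 0 → gr b ≠ 0)
    (hgrmul : ∀ b b', gr (b * b') = gr b * gr b')
    (D : Derivation ℂ B B) (hD : D ≠ 0) (hln : ∀ b : B, ∃ k : ℕ, (⇑D)^[k] b = 0)
    (D' : Derivation ℂ A A) (hln' : ∀ a : A, ∃ k : ℕ, (⇑D')^[k] a = 0)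
    (t₀ : ℝ)
    (hmax : ∀ b : B, d (D b) ≤ d b + (t₀ : WithBot ℝ))
    (hmaxatt : ∃ b : B, b ≠ 0 ∧ d (D b) = d b + (t₀ : WithBot ℝ))
    (hgrD : ∀ b : B, b ≠ 0 →
      (d (D b) = d b + (t₀ : WithBot ℝ) → D' (gr b) = gr (D b)) ∧
      (d (D b) ≠ d b + (t₀ : WithBot ℝ) → D' (gr b) = 0)) :
    ∀ b : B, b ≠ 0 → ∀ k : ℕ, (⇑D')^[k] (gr b) ≠ 0 → (⇑D)^[k] b ≠ 0 := by
  intro b hb k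
  induction k generalizing b with
  | zero => intro _; simpa using hb
  | succ k ih =>
    intro h
    rw [Function.iterate_succ_apply] at h ⊢
    have hD'ne : D' (gr b) ≠ 0 := by
      intro h0
      rw [h0] at h
      exact h (Function.iterate_fixed (map_zero D') k)
    have hDb : D b ≠ 0 := by
      intro h0
      apply hD'ne
      refine (hgrD b hb).2 ?_
      rw [h0, hd0]
      intro heq
      exact hdne b hb (by
        cases hdb : d b with
        | bot => rfl
        | coe r => rw [hdb, ← WithBot.coe_add] at heq; exact absurd heq.symm (WithBot.coe_ne_bot))
    have heq : d (D b) = d b + (t₀ : WithBot ℝ) := by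
      by_contra hne
      exact hD'ne ((hgrD b hb).2 hne)
    have hgre : D' (gr b) = gr (D b) := (hgrD b hb).1 heq
    rw [hgre] at h
    exact ih (D b) hDb h
end

section
/- Consider the weights d_y > 0 and d₁,…,dₙ with d_y, d₁,…,dₙ linearly independent over ℤ, mᵢ ≥ 1, r ≥ 2, and weight on z equal to r·d_y − Σ mᵢ dᵢ. In the ring ℂ[x₁,…,xₙ,y,z]/(x^{[m]} z − y^r), every nonzero homogeneous element (for the induced grading by weight) is the image of a unique monomial of ℂ[x₁,…,xₙ,y,z] not divisible by x₁^{m₁}⋯xₙ^{mₙ} z. -/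
/-!
Send `xᵢ ↦ tᵢ`, `y ↦ s`, `z ↦ s ^ r * t ^ (-m)` into the group algebra of `ℤⁿ × ℤ`. On exponents
this is the additive map `coord`; it identifies the two monomials of `x^{[m]} z - y^r`, so the
ideal lies in its kernel, and the weight of a monomial is the pairing of its `coord` with
`(d, d_y)`. By linear independence all monomials of a homogeneous `p` lie in one fibre of
`coord`. Rewriting `x^{[m]} z ↦ y^r` lowers the `z`-degree inside a fibre, so every monomial is
congruent to a reduced one, and a fibre contains exactly one reduced monomial; hence
`p ≡ c • X^f`. Two congruent monomials have the same image in the group algebra, which gives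
uniqueness.
-/

open MvPolynomial

section Binomial

variable {σ R G : Type*} [CommRing R] [AddCommMonoid G]

theorem monomial_add_sub_monomial_add_mem_span (g u v : σ →₀ ℕ) :
    monomial (g + u) (1 : R) - monomial (g + v) 1 ∈ Ideal.span {monomial u 1 - monomial v 1} := by
  have h : monomial (g + u) (1 : R) - monomial (g + v) 1
      = monomial g 1 * (monomial u 1 - monomial v 1) := by
    rw [mul_sub, monomial_mul, monomial_mul, one_mul]
  exact h ▸ Ideal.mul_mem_left _ _ (Ideal.mem_span_singleton_self _)

theorem span_binomial_le_ker_mapDomainRingHom (ψ : (σ →₀ ℕ) →+ G) {u v : σ →₀ ℕ}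
    (h : ψ u = ψ v) :
    Ideal.span {monomial u (1 : R) - monomial v 1}
      ≤ RingHom.ker (AddMonoidAlgebra.mapDomainRingHom R ψ) := by
  rw [Ideal.span_le, Set.singleton_subset_iff, SetLike.mem_coe, RingHom.mem_ker, map_sub,
    sub_eq_zero]
  simp [← single_eq_monomial, AddMonoidAlgebra.mapDomain_single, h]

theorem eq_of_mk_monomial_eq_mk_monomial (ψ : (σ →₀ ℕ) →+ G) {u v : σ →₀ ℕ} (h : ψ u = ψ v)
    {e f : σ →₀ ℕ} {a b : R} (ha : a ≠ 0)
    (heq : Ideal.Quotient.mk (Ideal.span {monomial u (1 : R) - monomial v 1}) (monomial e a)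
      = Ideal.Quotient.mk _ (monomial f b)) :
    ψ e = ψ f ∧ a = b := by
  have hker := span_binomial_le_ker_mapDomainRingHom ψ h (Ideal.Quotient.eq.mp heq)
  rw [RingHom.mem_ker, map_sub, sub_eq_zero, ← single_eq_monomial, ← single_eq_monomial] at hker
  simp only [AddMonoidAlgebra.mapDomainRingHom_apply] at hker
  rw [AddMonoidAlgebra.mapDomain_single, AddMonoidAlgebra.mapDomain_single,
    AddMonoidAlgebra.single_inj] at hker
  exact hker.resolve_right fun h0 => ha h0.1

theorem sub_monomial_sum_coeff_mem {I : Ideal (MvPolynomial σ R)} {p : MvPolynomial σ R}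
    {f : σ →₀ ℕ} (h : ∀ e ∈ p.support, monomial e 1 - monomial f 1 ∈ I) :
    p - monomial f (∑ e ∈ p.support, coeff e p) ∈ I := by
  have hsum : p - monomial f (∑ e ∈ p.support, coeff e p)
      = ∑ e ∈ p.support, C (coeff e p) * (monomial e 1 - monomial f 1) := by
    simp only [mul_sub, C_mul_monomial, mul_one, Finset.sum_sub_distrib,
      support_sum_monomial_coeff, map_sum]
  exact hsum ▸ I.sum_mem fun e he => I.mul_mem_left _ (h e he)

end Binomial

namespace BinomialHypersurface

variable {n : ℕ}

noncomputable def exponent (a : Fin n → ℕ) (b g : ℕ) : (Fin n ⊕ Fin 2) →₀ ℕ :=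
  Finsupp.equivFunOnFinite.symm (Sum.elim a ![b, g])

@[simp] theorem exponent_inl (a : Fin n → ℕ) (b g : ℕ) (i : Fin n) :
    exponent a b g (.inl i) = a i := rfl

@[simp] theorem exponent_inr_zero (a : Fin n → ℕ) (b g : ℕ) :
    exponent a b g (.inr 0) = b := rfl

@[simp] theorem exponent_inr_one (a : Fin n → ℕ) (b g : ℕ) :
    exponent a b g (.inr 1) = g := rfl

noncomputable def exponentEquiv : (Fin n → ℕ) × ℕ × ℕ ≃ ((Fin n ⊕ Fin 2) →₀ ℕ) where
  toFun q := exponent q.1 q.2.1 q.2.2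
  invFun e := (fun i => e (.inl i), e (.inr 0), e (.inr 1))
  left_inv _ := rfl
  right_inv e := by
    ext (i | j)
    · rfl
    · fin_cases j <;> rfl

theorem exponent_le_iff (a : Fin n → ℕ) (g : ℕ) (e : (Fin n ⊕ Fin 2) →₀ ℕ) :
    exponent a 0 g ≤ e ↔ (∀ i, a i ≤ e (.inl i)) ∧ g ≤ e (.inr 1) := by
  simp only [Finsupp.le_def, Sum.forall, Fin.forall_fin_two, exponent_inl, exponent_inr_zero,
    exponent_inr_one, zero_le, true_and]

theorem C_mul_prod_X_pow_eq_monomial {R : Type*} [CommSemiring R] (a : Fin n → ℕ) (b g : ℕ)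
    (c : R) :
    C c * (∏ i, X (.inl i) ^ a i) * X (.inr 0) ^ b * X (.inr 1) ^ g
      = monomial (exponent a b g) c := by
  rw [monomial_eq, Finsupp.prod_fintype _ _ fun _ => pow_zero _, Fintype.prod_sum_type]
  simp [Fin.prod_univ_two, mul_assoc]

noncomputable def ideal (R : Type*) [CommRing R] (m : Fin n → ℕ) (r : ℕ) :
    Ideal (MvPolynomial (Fin n ⊕ Fin 2) R) :=
  Ideal.span {monomial (exponent m 0 1) 1 - monomial (exponent 0 r 0) 1}

theorem span_eq_ideal (R : Type*) [CommRing R] (m : Fin n → ℕ) (r : ℕ) :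
    Ideal.span {(∏ i, X (.inl i) ^ m i) * X (.inr 1) - X (.inr 0) ^ r}
      = ideal R m r := by
  rw [ideal, ← C_mul_prod_X_pow_eq_monomial, ← C_mul_prod_X_pow_eq_monomial]
  simp

noncomputable def coord (m : Fin n → ℕ) (r : ℕ) : ((Fin n ⊕ Fin 2) →₀ ℕ) →+ (Fin n → ℤ) × ℤ where
  toFun e := (fun i => e (.inl i) - m i * e (.inr 1), e (.inr 0) + r * e (.inr 1))
  map_zero' := by ext <;> simp
  map_add' e f := by ext <;> simp <;> ring

variable {m : Fin n → ℕ} {r : ℕ}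

@[simp] theorem coord_fst_apply (e : (Fin n ⊕ Fin 2) →₀ ℕ) (i : Fin n) :
    (coord m r e).1 i = e (.inl i) - m i * e (.inr 1) := rfl

@[simp] theorem coord_snd (e : (Fin n ⊕ Fin 2) →₀ ℕ) :
    (coord m r e).2 = e (.inr 0) + r * e (.inr 1) := rfl

theorem coord_exponent_eq : coord m r (exponent m 0 1) = coord m r (exponent 0 r 0) := by
  ext <;> simp

theorem exponent_le_of_coord_eq {e f : (Fin n ⊕ Fin 2) →₀ ℕ}
    (h : coord m r e = coord m r f) (hlt : e (.inr 1) < f (.inr 1)) : exponent m 0 1 ≤ f := by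
  refine (exponent_le_iff _ _ _).2 ⟨fun i => ?_, hlt.trans_le' (Nat.zero_le _)⟩
  have hi := congrFun (congrArg Prod.fst h) i
  simp only [coord_fst_apply] at hi
  have hz : (e (.inr 1) : ℤ) + 1 ≤ f (.inr 1) := by exact_mod_cast hlt
  zify
  linarith [mul_le_mul_of_nonneg_left hz (Int.natCast_nonneg (m i)),
    Int.natCast_nonneg (e (.inl i))]

theorem eq_of_coord_eq {e f : (Fin n ⊕ Fin 2) →₀ ℕ}
    (he : ¬ exponent m 0 1 ≤ e) (hf : ¬ exponent m 0 1 ≤ f) (h : coord m r e = coord m r f) :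
    e = f := by
  have hz : e (.inr 1) = f (.inr 1) :=
    le_antisymm (not_lt.1 fun hlt => he (exponent_le_of_coord_eq h.symm hlt))
      (not_lt.1 fun hlt => hf (exponent_le_of_coord_eq h hlt))
  ext (i | j)
  · have hi := congrFun (congrArg Prod.fst h) i
    simp only [coord_fst_apply, hz] at hi
    omega
  · fin_cases j
    · have h0 := congrArg Prod.snd h
      simp only [coord_snd, hz] at h0
      simpa using h0
    · exact hz

theorem exists_reduced_monomial_congr (R : Type*) [CommRing R] (e : (Fin n ⊕ Fin 2) →₀ ℕ) :
    ∃ f, ¬ exponent m 0 1 ≤ f ∧ coord m r f = coord m r e ∧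
      monomial e (1 : R) - monomial f 1 ∈ ideal R m r := by
  induction hk : e (.inr 1) generalizing e with
  | zero => exact ⟨e, by simp [exponent_le_iff, hk], rfl, by simp⟩
  | succ k ih =>
    by_cases hle : exponent m 0 1 ≤ e
    · set g := e - exponent m 0 1
      have hg : g + exponent m 0 1 = e := tsub_add_cancel_of_le hle
      obtain ⟨f, hf, hcoord, hmem⟩ := ih (g + exponent 0 r 0) (by simp [g, hk])
      refine ⟨f, hf, ?_, ?_⟩
      · rw [hcoord, map_add, ← coord_exponent_eq, ← map_add, hg]
      · have hstep := monomial_add_sub_monomial_add_mem_span (R := R) g (exponent m 0 1)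
          (exponent 0 r 0)
        rw [hg] at hstep
        simpa using (ideal R m r).add_mem hstep hmem
    · exact ⟨e, hle, rfl, by simp⟩

theorem weight_eq_coord (d : Fin n → ℝ) (dy : ℝ) (e : (Fin n ⊕ Fin 2) →₀ ℕ) :
    (∑ i, (e (.inl i) : ℝ) * d i) + (e (.inr 0) : ℝ) * dy
        + (e (.inr 1) : ℝ) * ((r : ℝ) * dy - ∑ i, (m i : ℝ) * d i)
      = ((coord m r e).2 : ℝ) * dy + ∑ i, ((coord m r e).1 i : ℝ) * d i := by
  simp only [coord_fst_apply, coord_snd, Int.cast_sub, Int.cast_mul, Int.cast_add,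
    Int.cast_natCast, mul_sub, sub_mul, Finset.sum_sub_distrib, Finset.mul_sum]
  ring_nf

theorem coord_eq_of_weight_eq {d : Fin n → ℝ} {dy : ℝ}
    (hind : ∀ (c : ℤ) (e : Fin n → ℤ), (c : ℝ) * dy + ∑ i, (e i : ℝ) * d i = 0 → c = 0 ∧ e = 0)
    {e f : (Fin n ⊕ Fin 2) →₀ ℕ}
    (h : (∑ i, (e (.inl i) : ℝ) * d i) + (e (.inr 0) : ℝ) * dy
        + (e (.inr 1) : ℝ) * ((r : ℝ) * dy - ∑ i, (m i : ℝ) * d i)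
      = (∑ i, (f (.inl i) : ℝ) * d i) + (f (.inr 0) : ℝ) * dy
        + (f (.inr 1) : ℝ) * ((r : ℝ) * dy - ∑ i, (m i : ℝ) * d i)) :
    coord m r e = coord m r f := by
  rw [weight_eq_coord, weight_eq_coord] at h
  obtain ⟨h₂, h₁⟩ := hind ((coord m r e).2 - (coord m r f).2) ((coord m r e).1 - (coord m r f).1)
    (by simp only [Int.cast_sub, Pi.sub_apply, sub_mul, Finset.sum_sub_distrib]; linarith)
  exact Prod.ext (sub_eq_zero.1 h₁) (sub_eq_zero.1 h₂)

theorem existsUnique_reduced_monomial {R : Type*} [CommRing R]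
    {p : MvPolynomial (Fin n ⊕ Fin 2) R}
    (hhom : ∀ e ∈ p.support, ∀ f ∈ p.support, coord m r e = coord m r f)
    (hne : Ideal.Quotient.mk (ideal R m r) p ≠ 0) :
    ∃! q : ((Fin n ⊕ Fin 2) →₀ ℕ) × R, ¬ exponent m 0 1 ≤ q.1 ∧
      Ideal.Quotient.mk (ideal R m r) (monomial q.1 q.2) = Ideal.Quotient.mk _ p := by
  obtain ⟨e₀, he₀⟩ := support_nonempty.2 fun hp : p = 0 => hne (by rw [hp, map_zero])
  obtain ⟨f₀, hf₀, hcoord₀, -⟩ := exists_reduced_monomial_congr (m := m) (r := r) R e₀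
  have hcong : ∀ e ∈ p.support, monomial e 1 - monomial f₀ 1 ∈ ideal R m r := by
    intro e he
    obtain ⟨f, hf, hcoord, hmem⟩ := exists_reduced_monomial_congr (m := m) (r := r) R e
    rwa [eq_of_coord_eq hf hf₀ (by rw [hcoord, hcoord₀, hhom e he e₀ he₀])] at hmem
  have hp : Ideal.Quotient.mk (ideal R m r) (monomial f₀ (∑ e ∈ p.support, coeff e p))
      = Ideal.Quotient.mk _ p :=
    (Ideal.Quotient.eq.2 (sub_monomial_sum_coeff_mem hcong)).symm
  refine ⟨(f₀, _), ⟨hf₀, hp⟩, ?_⟩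
  rintro ⟨f, c⟩ ⟨hf, hq⟩
  have hc : c ≠ 0 := fun hc => hne (by rw [← hq, hc, monomial_zero, map_zero])
  obtain ⟨hcoord, hc_eq⟩ :=
    eq_of_mk_monomial_eq_mk_monomial (coord m r) coord_exponent_eq hc (hq.trans hp.symm)
  exact Prod.ext (eq_of_coord_eq hf hf₀ hcoord) hc_eq

end BinomialHypersurface

open BinomialHypersurface

theorem stmt18_general (n : ℕ) (dy : ℝ) (d : Fin n → ℝ)
    (hind : ∀ (c : ℤ) (e : Fin n → ℤ),
      (c : ℝ) * dy + ∑ i, (e i : ℝ) * d i = 0 → c = 0 ∧ e = 0)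
    (m : Fin n → ℕ) (r : ℕ)
    (w : ((Fin n ⊕ Fin 2) →₀ ℕ) → ℝ)
    (hw : w = fun e => (∑ i, (e (Sum.inl i) : ℝ) * d i)
        + (e (Sum.inr 0) : ℝ) * dy
        + (e (Sum.inr 1) : ℝ) * ((r : ℝ) * dy - ∑ i, (m i : ℝ) * d i))
    (I : Ideal (MvPolynomial (Fin n ⊕ Fin 2) ℂ))
    (hI : I = Ideal.span
      {(∏ i, MvPolynomial.X (Sum.inl i) ^ m i) * MvPolynomial.X (Sum.inr 1)
        - MvPolynomial.X (Sum.inr 0) ^ r})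
    (p : MvPolynomial (Fin n ⊕ Fin 2) ℂ)
    (hhom : ∃ t : ℝ, ∀ e ∈ p.support, w e = t)
    (hne : Ideal.Quotient.mk I p ≠ 0) :
    ∃! q : ((Fin n → ℕ) × ℕ × ℕ) × ℂ,
      ¬ ((∀ i, m i ≤ q.1.1 i) ∧ 1 ≤ q.1.2.2) ∧
      Ideal.Quotient.mk I
        (MvPolynomial.C q.2 * (∏ i, MvPolynomial.X (Sum.inl i) ^ q.1.1 i)
          * MvPolynomial.X (Sum.inr 0) ^ q.1.2.1
          * MvPolynomial.X (Sum.inr 1) ^ q.1.2.2) = Ideal.Quotient.mk I p := by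
  subst hw hI
  rw [span_eq_ideal] at hne ⊢
  obtain ⟨t, ht⟩ := hhom
  have hcoord : ∀ e ∈ p.support, ∀ f ∈ p.support, coord m r e = coord m r f :=
    fun e he f hf => coord_eq_of_weight_eq hind ((ht e he).trans (ht f hf).symm)
  refine (Equiv.existsUnique_congr (exponentEquiv.prodCongr (Equiv.refl ℂ)) fun q => ?_).2
    (existsUnique_reduced_monomial hcoord hne)
  rw [C_mul_prod_X_pow_eq_monomial]
  exact and_congr (not_congr (exponent_le_iff m 1 (exponentEquiv q.1)).symm) Iff.rfl

/-- With weights `d_y > 0`, `d₁,…,dₙ` such that `d_y,d₁,…,dₙ` are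
`ℤ`-linearly independent, `mᵢ ≥ 1`, `r ≥ 2`, and `z` of weight `r·d_y − Σmᵢdᵢ`,
every nonzero weight-homogeneous element of `ℂ[x,y,z]/(x^{[m]}z − y^r)` is the
image of a unique monomial not divisible by `x^{[m]} z`. -/
theorem stmt18 (n : ℕ) (dy : ℝ) (hdy : 0 < dy) (d : Fin n → ℝ)
    (hind : ∀ (c : ℤ) (e : Fin n → ℤ),
      (c : ℝ) * dy + ∑ i, (e i : ℝ) * d i = 0 → c = 0 ∧ e = 0)
    (m : Fin n → ℕ) (hm : ∀ i, 1 ≤ m i) (r : ℕ) (hr : 2 ≤ r)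
    (w : ((Fin n ⊕ Fin 2) →₀ ℕ) → ℝ)
    (hw : w = fun e => (∑ i, (e (Sum.inl i) : ℝ) * d i)
        + (e (Sum.inr 0) : ℝ) * dy
        + (e (Sum.inr 1) : ℝ) * ((r : ℝ) * dy - ∑ i, (m i : ℝ) * d i))
    (I : Ideal (MvPolynomial (Fin n ⊕ Fin 2) ℂ))
    (hI : I = Ideal.span
      {(∏ i, MvPolynomial.X (Sum.inl i) ^ m i) * MvPolynomial.X (Sum.inr 1)
        - MvPolynomial.X (Sum.inr 0) ^ r})
    (p : MvPolynomial (Fin n ⊕ Fin 2) ℂ)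
    (hhom : ∃ t : ℝ, ∀ e ∈ p.support, w e = t)
    (hne : Ideal.Quotient.mk I p ≠ 0) :
    ∃! q : ((Fin n → ℕ) × ℕ × ℕ) × ℂ,
      ¬ ((∀ i, m i ≤ q.1.1 i) ∧ 1 ≤ q.1.2.2) ∧
      Ideal.Quotient.mk I
        (MvPolynomial.C q.2 * (∏ i, MvPolynomial.X (Sum.inl i) ^ q.1.1 i)
          * MvPolynomial.X (Sum.inr 0) ^ q.1.2.1
          * MvPolynomial.X (Sum.inr 1) ^ q.1.2.2) = Ideal.Quotient.mk I p :=
  stmt18_general n dy d hind m r w hw I hI p hhom hne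
end
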